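/- Let Z = Diag(1, ω, ω², ω³, ω⁴) with ω = e^{2πi/5}, and let E₁ = Diag(1, (1/√5)I₅), E₂ = Diag(0, √(2/5) Z), E₃ = E₂† be 6×6 block-diagonal matrices. Then Φ = Σ_{k=1}^3 E_k · E_k† is a unital quantum channel and span{E₁, E₂, E₃} contains no unitary matrix. -/
import Mathlib


open Matrix
open scoped Matrix ComplexOrder

noncomputable section

/-- The fifth root of unity `ω = e^{2πi/5}`. -/
def ω : ℂ := Complex.exp (2 * Real.pi * Complex.I / 5)

/-- `F₁ = Diag(1, (1/√5) I₅)` as a diagonal `6×6` matrix. -/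
def F₁ : Matrix (Fin 6) (Fin 6) ℂ :=
  Matrix.diagonal fun i => if i = 0 then 1 else ((Real.sqrt 5 : ℂ))⁻¹

/-- `F₂ = Diag(0, √(2/5) Z₅)` with `Z₅ = Diag(1, ω, ω², ω³, ω⁴)`. -/
def F₂ : Matrix (Fin 6) (Fin 6) ℂ :=
  Matrix.diagonal fun i =>
    if i = 0 then 0 else (Real.sqrt (2 / 5) : ℂ) * ω ^ ((i : ℕ) - 1)

/-- `F₃ = F₂ᴴ`. -/
def F₃ : Matrix (Fin 6) (Fin 6) ℂ := F₂ᴴ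


lemma ω_pow_five : ω ^ 5 = 1 := by
  rw [ω, ← Complex.exp_nat_mul, show ((5:ℕ):ℂ) * (2 * Real.pi * Complex.I / 5)
      = 2 * Real.pi * Complex.I by push_cast; ring]
  exact Complex.exp_two_pi_mul_I

lemma ω_ne_zero : ω ≠ 0 := Complex.exp_ne_zero _

lemma ω_conj_mul : (starRingEnd ℂ) ω * ω = 1 := by
  rw [ω, ← Complex.exp_conj, ← Complex.exp_add]
  rw [show (starRingEnd ℂ) (2 * Real.pi * Complex.I / 5) + 2 * Real.pi * Complex.I / 5 = 0 by
    simp [map_div₀, _root_.map_mul, Complex.conj_I, Complex.conj_ofReal, map_ofNat]; ring]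
  exact Complex.exp_zero

lemma ω_conj : (starRingEnd ℂ) ω = ω ^ 4 := by
  have h : ω ^ 4 * ω = 1 := by linear_combination ω_pow_five
  exact mul_right_cancel₀ ω_ne_zero (ω_conj_mul.trans h.symm)

lemma ω_ne_one : ω ≠ 1 := by
  rw [ω]
  intro h
  rw [Complex.exp_eq_one_iff] at h
  obtain ⟨n, hn⟩ := h
  have h2 : ((n:ℂ) * 5 - 1) * (2 * Real.pi * Complex.I) = 0 := by
    linear_combination (-5:ℂ) * hn
  rcases mul_eq_zero.mp h2 with h' | h'
  · have : ((n * 5 - 1 : ℤ) : ℂ) = 0 := by push_cast; linear_combination h'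
    have : (n * 5 - 1 : ℤ) = 0 := by exact_mod_cast this
    omega
  · simp [Real.pi_ne_zero, Complex.I_ne_zero] at h'

lemma ω_sum : 1 + ω + ω^2 + ω^3 + ω^4 = 0 := by
  have h : (ω - 1) * (1 + ω + ω^2 + ω^3 + ω^4) = 0 := by linear_combination ω_pow_five
  rcases mul_eq_zero.mp h with h' | h'
  · exact absurd (sub_eq_zero.mp h') ω_ne_one
  · exact h'

lemma ω_conj2 : (starRingEnd ℂ) (ω^2) = ω ^ 3 := by
  rw [map_pow, ω_conj]; linear_combination ω^3 * ω_pow_five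
lemma ω_conj3 : (starRingEnd ℂ) (ω^3) = ω ^ 2 := by
  rw [map_pow, ω_conj]; linear_combination (ω^7 + ω^2) * ω_pow_five
lemma ω_conj4 : (starRingEnd ℂ) (ω^4) = ω := by
  rw [map_pow, ω_conj]; linear_combination (ω^11 + ω^6 + ω) * ω_pow_five

lemma ω_conj_pow_mul (k : ℕ) : (starRingEnd ℂ) (ω ^ k) * ω ^ k = 1 := by
  rw [map_pow, ← mul_pow, ω_conj_mul, one_pow]

lemma key_alg (a ap b bp c cp s t u : ℂ)
    (h5 : u^5 = 1) (hs : 1 + u + u^2 + u^3 + u^4 = 0)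
    (hss : s * s = 1/5) (htt : t * t = 2/5) (hs0 : s ≠ 0) (ht0 : t ≠ 0)
    (e0 : ap * a = 1)
    (E0 : (ap*s + bp*t + cp*t) * (a*s + b*t + c*t) = 1)
    (E1 : (ap*s + bp*t*u^4 + cp*t*u) * (a*s + b*t*u + c*t*u^4) = 1)
    (E2 : (ap*s + bp*t*u^3 + cp*t*u^2) * (a*s + b*t*u^2 + c*t*u^3) = 1)
    (E3 : (ap*s + bp*t*u^2 + cp*t*u^3) * (a*s + b*t*u^3 + c*t*u^2) = 1)
    (E4 : (ap*s + bp*t*u + cp*t*u^4) * (a*s + b*t*u^4 + c*t*u) = 1) :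
    False := by
  have S : ap*a*(s*s) + bp*b*(t*t) + cp*c*(t*t) = 1 := by
    linear_combination (1/5:ℂ)*u^0*E0 + (1/5:ℂ)*u^0*E1 + (1/5:ℂ)*u^0*E2 + (1/5:ℂ)*u^0*E3 + (1/5:ℂ)*u^0*E4 - ((4/5:ℂ)*c*cp*t^2 + (1/5:ℂ)*bp*c*t^2*u + (1/5:ℂ)*bp*c*t^2*u^3 + (1/5:ℂ)*b*cp*t^2*u + (1/5:ℂ)*b*cp*t^2*u^3 + (4/5:ℂ)*b*bp*t^2)*h5 - ((1/5:ℂ)*bp*c*t^2 + (1/5:ℂ)*b*cp*t^2 + (1/5:ℂ)*ap*c*s*t + (1/5:ℂ)*ap*b*s*t + (1/5:ℂ)*a*cp*s*t + (1/5:ℂ)*a*bp*s*t)*hs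
  have T : a*bp*(s*t) + c*ap*(s*t) = 0 := by
    linear_combination (1/5:ℂ)*u^0*E0 + (1/5:ℂ)*u^1*E1 + (1/5:ℂ)*u^2*E2 + (1/5:ℂ)*u^3*E3 + (1/5:ℂ)*u^4*E4 - ((1/5:ℂ)*c*cp*t^2*u + (1/5:ℂ)*c*cp*t^2*u^2 + (1/5:ℂ)*c*cp*t^2*u^3 + (1/5:ℂ)*c*cp*t^2*u^4 + (1/5:ℂ)*bp*c*t^2*u + (1/5:ℂ)*bp*c*t^2*u^2 + (1/5:ℂ)*bp*c*t^2*u^3 + (1/5:ℂ)*bp*c*t^2*u^4 + (1/5:ℂ)*b*cp*t^2*u + (1/5:ℂ)*b*cp*t^2*u^2 + (1/5:ℂ)*b*cp*t^2*u^4 + (1/5:ℂ)*b*cp*t^2*u^7 + (1/5:ℂ)*b*bp*t^2*u + (1/5:ℂ)*b*bp*t^2*u^2 + (1/5:ℂ)*b*bp*t^2*u^3 + (1/5:ℂ)*b*bp*t^2*u^4 + (4/5:ℂ)*ap*c*s*t + (1/5:ℂ)*ap*b*s*t*u + (1/5:ℂ)*ap*b*s*t*u^3 + (1/5:ℂ)*a*cp*s*t*u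 + (1/5:ℂ)*a*cp*s*t*u^3 + (4/5:ℂ)*a*bp*s*t)*h5 - ((-1/5:ℂ) + (1/5:ℂ)*c*cp*t^2 + (1/5:ℂ)*bp*c*t^2 + (1/5:ℂ)*b*cp*t^2 + (1/5:ℂ)*b*bp*t^2 + (1/5:ℂ)*ap*b*s*t + (1/5:ℂ)*a*cp*s*t + (1/5:ℂ)*a*ap*s^2)*hs
  have U : c*bp*(t*t) = 0 := by
    linear_combination (1/5:ℂ)*u^0*E0 + (1/5:ℂ)*u^2*E1 + (1/5:ℂ)*u^4*E2 + (1/5:ℂ)*u^6*E3 + (1/5:ℂ)*u^8*E4 - ((-1/5:ℂ)*u + (-1/5:ℂ)*u^3 + (1/5:ℂ)*c*cp*t^2*u + (1/5:ℂ)*c*cp*t^2*u^2 + (1/5:ℂ)*c*cp*t^2*u^3 + (1/5:ℂ)*c*cp*t^2*u^4 + (1/5:ℂ)*c*cp*t^2*u^6 + (1/5:ℂ)*c*cp*t^2*u^8 + (4/5:ℂ)*bp*c*t^2 + (4/5:ℂ)*bp*c*t^2*u^5 + (1/5:ℂ)*b*cp*t^2*u + (1/5:ℂ)*b*cp*t^2*u^2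 + (1/5:ℂ)*b*cp*t^2*u^3 + (1/5:ℂ)*b*cp*t^2*u^6 + (1/5:ℂ)*b*cp*t^2*u^7 + (1/5:ℂ)*b*cp*t^2*u^11 + (1/5:ℂ)*b*bp*t^2*u + (1/5:ℂ)*b*bp*t^2*u^2 + (1/5:ℂ)*b*bp*t^2*u^3 + (1/5:ℂ)*b*bp*t^2*u^4 + (1/5:ℂ)*b*bp*t^2*u^6 + (1/5:ℂ)*b*bp*t^2*u^8 + (1/5:ℂ)*ap*c*s*t*u + (1/5:ℂ)*ap*c*s*t*u^2 + (1/5:ℂ)*ap*c*s*t*u^3 + (1/5:ℂ)*ap*c*s*t*u^4 + (1/5:ℂ)*ap*b*s*t*u + (1/5:ℂ)*ap*b*s*t*u^2 + (1/5:ℂ)*ap*b*s*t*u^4 + (1/5:ℂ)*ap*b*s*t*u^7 + (1/5:ℂ)*a*cp*s*t*u + (1/5:ℂ)*a*cp*s*t*u^2 + (1/5:ℂ)*a*cp*s*t*u^4 + (1/5:ℂ)*a*cp*s*t*u^7 + (1/5:ℂ)*a*bp*s*t*u + (1/5:ℂ)*a*bp*s*t*u^2 + (1/5:ℂ)*a*bp*s*t*u^3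 + (1/5:ℂ)*a*bp*s*t*u^4 + (1/5:ℂ)*a*ap*s^2*u + (1/5:ℂ)*a*ap*s^2*u^3)*h5 - ((-1/5:ℂ) + (1/5:ℂ)*c*cp*t^2 + (1/5:ℂ)*b*cp*t^2 + (1/5:ℂ)*b*bp*t^2 + (1/5:ℂ)*ap*c*s*t + (1/5:ℂ)*ap*b*s*t + (1/5:ℂ)*a*cp*s*t + (1/5:ℂ)*a*bp*s*t + (1/5:ℂ)*a*ap*s^2)*hs
  have ha0 : a ≠ 0 := by
    intro h; rw [h, mul_zero] at e0; exact one_ne_zero e0.symm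
  have hap0 : ap ≠ 0 := by
    intro h; rw [h, zero_mul] at e0; exact one_ne_zero e0.symm
  have hst0 : s * t ≠ 0 := mul_ne_zero hs0 ht0
  have hcb : c * bp = 0 := by
    have h2 : c * bp * (2/5 : ℂ) = 0 := htt ▸ U
    rcases mul_eq_zero.mp h2 with h | h
    · exact h
    · norm_num at h
  have hfin : bp = 0 ∧ c = 0 := by
    rcases mul_eq_zero.mp hcb with hc | hb
    · refine ⟨?_, hc⟩
      have h := T; rw [hc] at h; simp only [zero_mul, add_zero] at h
      rcases mul_eq_zero.mp h with h' | h'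
      · exact ((mul_eq_zero.mp h').resolve_left ha0)
      · exact absurd h' hst0
    · refine ⟨hb, ?_⟩
      have h := T; rw [hb] at h; simp only [mul_zero, zero_mul, zero_add] at h
      rcases mul_eq_zero.mp h with h' | h'
      · exact ((mul_eq_zero.mp h').resolve_right hap0)
      · exact absurd h' hst0
  obtain ⟨hb, hc⟩ := hfin
  rw [hb, hc, hss, htt, e0] at S
  norm_num at S


/-- `Φ(X) = ∑ₖ Fₖ X Fₖᴴ` is a unital quantum channel, and the span of
`{F₁, F₂, F₃}` contains no unitary matrix. -/
theorem example_factorizable_channel_no_unitary_in_kraus_space :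
    (F₁ᴴ * F₁ + F₂ᴴ * F₂ + F₃ᴴ * F₃ = 1) ∧
    (F₁ * F₁ᴴ + F₂ * F₂ᴴ + F₃ * F₃ᴴ = 1) ∧
    (∀ L ∈ Submodule.span ℂ ({F₁, F₂, F₃} : Set (Matrix (Fin 6) (Fin 6) ℂ)),
      L ∉ Matrix.unitaryGroup (Fin 6) ℂ) := by
  have h5 := ω_pow_five
  have hs := ω_sum
  have hs5 : (Real.sqrt 5 : ℂ) * (Real.sqrt 5 : ℂ) = 5 := by
    rw [← Complex.ofReal_mul, Real.mul_self_sqrt (by norm_num : (0:ℝ) ≤ 5)]; norm_num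
  have hσσ : ((Real.sqrt 5 : ℂ))⁻¹ * ((Real.sqrt 5 : ℂ))⁻¹ = 1/5 := by
    rw [← mul_inv, hs5]; norm_num
  have hττ : ((Real.sqrt (2/5) : ℂ)) * ((Real.sqrt (2/5) : ℂ)) = 2/5 := by
    rw [← Complex.ofReal_mul, Real.mul_self_sqrt (by norm_num : (0:ℝ) ≤ 2/5)]; norm_num
  have hσ0 : ((Real.sqrt 5 : ℂ))⁻¹ ≠ 0 := by
    apply inv_ne_zero
    exact_mod_cast Complex.ofReal_ne_zero.mpr (by positivity)
  have hτ0 : ((Real.sqrt (2/5) : ℂ)) ≠ 0 :=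
    Complex.ofReal_ne_zero.mpr (by positivity)
  have hentry : ∀ k : ℕ,
      (starRingEnd ℂ) ((Real.sqrt 5 : ℂ))⁻¹ * ((Real.sqrt 5 : ℂ))⁻¹
      + (starRingEnd ℂ) ((Real.sqrt (2/5) : ℂ) * ω ^ k) * ((Real.sqrt (2/5) : ℂ) * ω ^ k)
      + ((Real.sqrt (2/5) : ℂ) * ω ^ k) * (starRingEnd ℂ) ((Real.sqrt (2/5) : ℂ) * ω ^ k)
      = 1 := by
    intro k
    rw [map_inv₀, Complex.conj_ofReal, _root_.map_mul, Complex.conj_ofReal]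
    linear_combination hσσ + 2*((starRingEnd ℂ) (ω^k))*(ω^k)*hττ + (4/5:ℂ)*(ω_conj_pow_mul k)
  refine ⟨?_, ?_, ?_⟩
  · rw [F₃, Matrix.conjTranspose_conjTranspose, F₁, F₂, Matrix.diagonal_conjTranspose,
      Matrix.diagonal_conjTranspose, Matrix.diagonal_mul_diagonal, Matrix.diagonal_mul_diagonal,
      Matrix.diagonal_mul_diagonal, Matrix.diagonal_add, Matrix.diagonal_add, ← Matrix.diagonal_one]
    ext i j
    rcases eq_or_ne i j with rfl | hij
    · simp only [Matrix.diagonal_apply_eq, Pi.add_apply, Pi.mul_apply, Pi.star_apply, Complex.star_def]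
      by_cases h0 : i = 0
      · simp [h0]
      · simp only [h0, if_false]
        linear_combination hentry ((i:ℕ) - 1)
    · simp [Matrix.diagonal_apply_ne _ hij]
  · rw [F₃, Matrix.conjTranspose_conjTranspose, F₁, F₂, Matrix.diagonal_conjTranspose,
      Matrix.diagonal_conjTranspose, Matrix.diagonal_mul_diagonal, Matrix.diagonal_mul_diagonal,
      Matrix.diagonal_mul_diagonal, Matrix.diagonal_add, Matrix.diagonal_add, ← Matrix.diagonal_one]
    ext i j
    rcases eq_or_ne i j with rfl | hij
    · simp only [Matrix.diagonal_apply_eq, Pi.add_apply, Pi.mul_apply, Pi.star_apply, Complex.star_def]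
      by_cases h0 : i = 0
      · simp [h0]
      · simp only [h0, if_false]
        linear_combination hentry ((i:ℕ) - 1)
    · simp [Matrix.diagonal_apply_ne _ hij]
  · intro L hL hU
    rw [show ({F₁, F₂, F₃} : Set (Matrix (Fin 6) (Fin 6) ℂ))
        = insert F₁ (insert F₂ {F₃}) from rfl] at hL
    rw [Submodule.mem_span_insert] at hL
    obtain ⟨a, z, hz, rfl⟩ := hL
    rw [Submodule.mem_span_insert] at hz
    obtain ⟨b, w, hw, rfl⟩ := hz
    rw [Submodule.mem_span_singleton] at hw
    obtain ⟨c, rfl⟩ := hw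
    set v₁ : Fin 6 → ℂ := fun i => if i = 0 then 1 else ((Real.sqrt 5 : ℂ))⁻¹ with hv₁
    set v₂ : Fin 6 → ℂ := fun i => if i = 0 then 0 else (Real.sqrt (2/5) : ℂ) * ω ^ ((i:ℕ) - 1)
      with hv₂
    have hdiag : a • F₁ + (b • F₂ + c • F₃)
        = Matrix.diagonal (a • v₁ + (b • v₂ + c • star v₂)) := by
      rw [F₃, F₁, F₂, Matrix.diagonal_conjTranspose, ← Matrix.diagonal_smul,
        ← Matrix.diagonal_smul, ← Matrix.diagonal_smul, Matrix.diagonal_add,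
        Matrix.diagonal_add]
      rfl
    have hunit := Matrix.mem_unitaryGroup_iff'.mp hU
    rw [hdiag, Matrix.star_eq_conjTranspose, Matrix.diagonal_conjTranspose,
      Matrix.diagonal_mul_diagonal] at hunit
    have key : ∀ i : Fin 6,
        (starRingEnd ℂ) ((a • v₁ + (b • v₂ + c • star v₂)) i)
          * (a • v₁ + (b • v₂ + c • star v₂)) i = 1 := by
      intro i
      have h := congrFun (congrFun hunit i) i
      simpa [Matrix.diagonal_apply_eq, Matrix.one_apply_eq, Complex.star_def] using h
    have e0 := key ⟨0, by norm_num⟩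
    have e1 := key ⟨1, by norm_num⟩
    have e2 := key ⟨2, by norm_num⟩
    have e3 := key ⟨3, by norm_num⟩
    have e4 := key ⟨4, by norm_num⟩
    have e5 := key ⟨5, by norm_num⟩
    simp only [hv₁, hv₂, Pi.add_apply, Pi.smul_apply, Pi.star_apply, smul_eq_mul,
      Complex.star_def] at e0 e1 e2 e3 e4 e5
    simp (config := { decide := true }) [Fin.ext_iff, _root_.map_mul, map_add, map_inv₀,
      Complex.conj_ofReal, Complex.conj_conj, ω_conj, ω_conj2, ω_conj3, ω_conj4]
      at e0 e1 e2 e3 e4 e5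
    have hττ' : ((Real.sqrt 2 : ℂ)/(Real.sqrt 5 : ℂ)) * ((Real.sqrt 2 : ℂ)/(Real.sqrt 5 : ℂ))
        = 2/5 := by
      rw [div_mul_div_comm, ← Complex.ofReal_mul, ← Complex.ofReal_mul,
        Real.mul_self_sqrt (by norm_num : (0:ℝ) ≤ 2), Real.mul_self_sqrt (by norm_num : (0:ℝ) ≤ 5)]
      norm_num
    have hτ0' : ((Real.sqrt 2 : ℂ)/(Real.sqrt 5 : ℂ)) ≠ 0 := by
      apply div_ne_zero <;> exact Complex.ofReal_ne_zero.mpr (by positivity)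
    exact key_alg a ((starRingEnd ℂ) a) b ((starRingEnd ℂ) b) c ((starRingEnd ℂ) c)
      ((Real.sqrt 5 : ℂ))⁻¹ ((Real.sqrt 2 : ℂ)/(Real.sqrt 5 : ℂ)) ω h5 hs hσσ hττ' hσ0 hτ0' 
      (by linear_combination e0)
      (by linear_combination e1)
      (by linear_combination e2 + (0:ℂ)*h5)
      (by linear_combination e3 + (0:ℂ)*h5)
      (by linear_combination e4 + (0:ℂ)*h5)
      (by linear_combination e5 + (0:ℂ)*h5)
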